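/- (Region E) Let F be the midpoint of segment BC, G the orthogonal projection of C onto line AB, and θ = ∠ B A C. The circular segment of the circle with center F and radius a/2 cut off by the chord CG, on the side of line CG opposite to B — that is, the set of points x with dist x F ≤ a/2 lying on the opposite side of the line through C and G from B — has two-dimensional Lebesgue measure a^2·(π − 2θ)/8 − a^3·b/(4·c^2). -/

import Mathlib

/-!
The line `CG` passes through `C` perpendicular to `AB`, so the side of it opposite to `B` is the
open half-plane `⟪B - A, x - C⟫ < 0`. Measured from the centre `F = (B + C) / 2` along the unit
normal `(A - B) / c`, this half-plane starts at distance `(a / 2) cos φ = a² / (2c)`, where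
`φ = ∠CBA = π/2 - θ`. The region is therefore a circular segment of radius `r = a / 2` and
half-angle `φ`, whose area `r² (φ - sin φ cos φ)` is computed by slicing and the substitution
`x = r cos t`; finally `sin φ = b / c` and `cos φ = a / c`.
-/

open EuclideanGeometry MeasureTheory Real Set Module
open scoped RealInnerProductSpace

namespace AffineSubspace

variable {V P : Type*} [AddCommGroup V] [Module ℝ V] [AddTorsor V P]

theorem sOppSide_iff_neg_of_forall_mem_iff {s : AffineSubspace ℝ P} (f : P →ᵃ[ℝ] ℝ)
    (hs : ∀ q, q ∈ s ↔ f q = 0) {x y : P} (hy : 0 < f y) : s.SOppSide x y ↔ f x < 0 := by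
  constructor
  · intro h
    obtain ⟨z, hz, ⟨t, ⟨ht0, ht1⟩, rfl⟩, -, hzy⟩ := h.exists_sbtw
    have hfz : (1 - t) * f x + t * f y = 0 := by
      rw [← AffineMap.lineMap_apply_ring, ← f.apply_lineMap, ← hs]; exact hz
    have ht1' : t < 1 := lt_of_le_of_ne ht1 (by rintro rfl; simp at hzy)
    have hfx : f x ≠ 0 := fun h0 => h.left_notMem ((hs x).2 h0)
    by_contra! hx
    nlinarith [mul_pos (sub_pos.2 ht1') (lt_of_le_of_ne hx hfx.symm), mul_nonneg ht0 hy.le]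
  · intro hx
    have hxy : x ≠ y := by rintro rfl; linarith
    refine Sbtw.sOppSide_of_notMem_of_mem (y := AffineMap.lineMap x y (f x / (f x - f y)))
      (sbtw_lineMap_iff.2 ⟨hxy, div_pos_of_neg_of_neg hx (by linarith), ?_⟩)
      (fun h => hx.ne ((hs x).1 h)) ?_
    · rw [div_lt_one_of_neg (by linarith)]; linarith
    · rw [hs, f.apply_lineMap, AffineMap.lineMap_apply_ring]
      field_simp [show f x - f y ≠ 0 by linarith]
      ring

end AffineSubspace

section Plane

variable {V P : Type*} [NormedAddCommGroup V] [InnerProductSpace ℝ V] [Fact (finrank ℝ V = 2)]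
  [MetricSpace P] [NormedAddTorsor V P]

theorem mem_affineSpan_pair_iff_inner_vsub_eq_zero {n : V} (hn : n ≠ 0) {p q : P} (hpq : p ≠ q)
    (hq : ⟪n, q -ᵥ p⟫ = 0) (x : P) :
    x ∈ line[ℝ, p, q] ↔ ⟪n, x -ᵥ p⟫ = 0 := by
  rw [← vsub_vadd x p, vadd_left_mem_affineSpan_pair, vsub_vadd]
  constructor
  · rintro ⟨r, hr⟩
    rw [← hr, inner_smul_right, hq, mul_zero]
  · intro hx
    exact Submodule.mem_span_singleton.1 <|
      Submodule.mem_span_singleton_of_inner_eq_zero_of_inner_eq_zero hn (vsub_ne_zero.2 hpq.symm)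
        hx hq

theorem sOppSide_line_orthogonalProjection_iff {A B C : P} (hC : C ∉ line[ℝ, A, B]) {x y : P}
    (hy : 0 < ⟪B -ᵥ A, y -ᵥ C⟫) :
    line[ℝ, C, (orthogonalProjection line[ℝ, A, B] C : P)].SOppSide x y ↔
      ⟪B -ᵥ A, x -ᵥ C⟫ < 0 := by
  set G : P := ↑(orthogonalProjection line[ℝ, A, B] C)
  have hn : B -ᵥ A ≠ 0 := by rintro h; rw [h, inner_zero_left] at hy; exact hy.false
  have hGC : ⟪B -ᵥ A, G -ᵥ C⟫ = 0 :=
    Submodule.inner_right_of_mem_orthogonal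
      (AffineSubspace.vsub_mem_direction (right_mem_affineSpan_pair ℝ A B)
        (left_mem_affineSpan_pair ℝ A B))
      (orthogonalProjection_vsub_mem_direction_orthogonal _ C)
  have hCG : C ≠ G := fun h => hC (h ▸ orthogonalProjection_mem C)
  let f : P →ᵃ[ℝ] ℝ :=
    (innerₛₗ ℝ (B -ᵥ A)).toAffineMap.comp (AffineEquiv.vaddConst ℝ C).symm.toAffineMap
  have hf (q : P) : f q = ⟪B -ᵥ A, q -ᵥ C⟫ := by simp [f]
  rw [AffineSubspace.sOppSide_iff_neg_of_forall_mem_iff f (fun q => by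
    rw [hf, mem_affineSpan_pair_iff_inner_vsub_eq_zero hn hCG hGC]) (by rwa [hf]), hf]

theorem sOppSide_line_altitude_iff_mul_cos_lt_inner {A B C : P} (hC : ∠ A C B = π / 2)
    (hA : A ≠ C) (hB : B ≠ C) (x : P) :
    line[ℝ, C, (orthogonalProjection line[ℝ, A, B] C : P)].SOppSide x B ↔
      dist B C / 2 * cos (∠ C B A)
        < ⟪(dist A B)⁻¹ • (A -ᵥ B), x -ᵥ midpoint ℝ B C⟫ := by
  have hCAB : C ∉ line[ℝ, A, B] := fun h => by
    have := collinear_insert_of_mem_affineSpan_pair h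
    rw [Set.insert_comm] at this
    rcases collinear_iff_eq_or_eq_or_angle_eq_zero_or_angle_eq_pi.1 this with h | h | h | h
    · exact hA h
    · exact hB h
    all_goals rw [h] at hC; linarith [pi_pos]
  have hperp : ⟪A -ᵥ C, B -ᵥ C⟫ = 0 :=
    (InnerProductGeometry.inner_eq_zero_iff_angle_eq_pi_div_two _ _).2 hC
  have hBA : ⟪B -ᵥ A, B -ᵥ C⟫ = dist B C ^ 2 := by
    rw [← vsub_sub_vsub_cancel_right B A C, inner_sub_left, hperp, real_inner_self_eq_norm_sq,
      dist_eq_norm_vsub V]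
    ring
  have hAB : A ≠ B := by rintro rfl; rw [angle_self_of_ne hA] at hC; linarith [pi_pos]
  have hc : 0 < dist A B := dist_pos.2 hAB
  have hsplit : x -ᵥ C = (x -ᵥ midpoint ℝ B C) + (2⁻¹ : ℝ) • (B -ᵥ C) := by
    rw [← vsub_add_vsub_cancel x (midpoint ℝ B C) C, midpoint_vsub_right]
    simp
  rw [sOppSide_line_orthogonalProjection_iff hCAB (by rw [hBA]; exact pow_pos (dist_pos.2 hB) 2),
    hsplit, inner_add_right, inner_smul_right, hBA, inner_smul_left, ← neg_vsub_eq_vsub_rev B A,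
    inner_neg_left, cos_angle_of_angle_eq_pi_div_two hC,
    show dist B C / 2 * (dist B C / dist A B) = (dist A B)⁻¹ * (dist B C ^ 2 / 2) by ring]
  simp only [RCLike.conj_to_real, mul_lt_mul_iff_right₀ (inv_pos.2 hc)]
  constructor <;> intro h <;> linarith

end Plane

theorem integral_two_mul_sqrt_sq_sub_sq_of_mul_cos {r φ : ℝ} (hr : 0 ≤ r) (hφ₀ : 0 ≤ φ)
    (hφ : φ ≤ π) :
    ∫ x in r * cos φ..r, 2 * √(r ^ 2 - x ^ 2) = r ^ 2 * (φ - sin φ * cos φ) := by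
  have hsqrt : ∀ t ∈ uIcc φ 0, √(r ^ 2 - (r * cos t) ^ 2) = r * sin t := by
    intro t ht
    rw [uIcc_of_ge hφ₀] at ht
    rw [← sqrt_sq (mul_nonneg hr (sin_nonneg_of_nonneg_of_le_pi ht.1 (ht.2.trans hφ)))]
    congr 1
    linear_combination -r ^ 2 * sin_sq_add_cos_sq t
  calc ∫ x in r * cos φ..r, 2 * √(r ^ 2 - x ^ 2)
      = ∫ t in φ..0, ((fun x => 2 * √(r ^ 2 - x ^ 2)) ∘ (r * cos ·)) t * (r * -sin t) := by
        rw [intervalIntegral.integral_comp_mul_deriv (fun t _ => (hasDerivAt_cos t).const_mul r)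
          (by fun_prop) (by fun_prop), cos_zero, mul_one]
    _ = ∫ t in φ..0, -(2 * r ^ 2 * sin t ^ 2) :=
        intervalIntegral.integral_congr fun t ht => by
          simp only [Function.comp_apply, hsqrt t ht]; ring
    _ = r ^ 2 * (φ - sin φ * cos φ) := by
        rw [intervalIntegral.integral_neg, intervalIntegral.integral_const_mul, integral_sin_sq,
          sin_zero, cos_zero]
        ring

theorem volume_setOf_sq_add_sq_le_and_lt_fst {r d : ℝ} (hd : -r ≤ d) (hdr : d ≤ r) :
    volume {p : ℝ × ℝ | p.1 ^ 2 + p.2 ^ 2 ≤ r ^ 2 ∧ d < p.1}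
      = ENNReal.ofReal (∫ x in d..r, 2 * √(r ^ 2 - x ^ 2)) := by
  set S := {p : ℝ × ℝ | p.1 ^ 2 + p.2 ^ 2 ≤ r ^ 2 ∧ d < p.1}
  have hS : MeasurableSet S :=
    (measurableSet_le (f := fun p : ℝ × ℝ => p.1 ^ 2 + p.2 ^ 2) (by fun_prop)
      measurable_const).inter (measurableSet_lt measurable_const measurable_fst)
  have hslice (x : ℝ) : volume (Prod.mk x ⁻¹' S)
      = (Ioc d r).indicator (fun x => .ofReal (2 * √(r ^ 2 - x ^ 2))) x := by
    by_cases hx : x ∈ Ioc d r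
    · have hx2 : 0 ≤ r ^ 2 - x ^ 2 := by nlinarith [hx.1, hx.2]
      have : Prod.mk x ⁻¹' S = Icc (-√(r ^ 2 - x ^ 2)) √(r ^ 2 - x ^ 2) := by
        ext y
        rw [mem_Icc, ← Real.sq_le hx2]
        simp only [S, mem_preimage, mem_ofPred_eq, hx.1, and_true]
        constructor <;> intro h <;> linarith
      rw [this, Real.volume_Icc, indicator_of_mem hx, sub_neg_eq_add, two_mul]
    · have : Prod.mk x ⁻¹' S = ∅ := by
        refine eq_empty_of_forall_notMem fun y ⟨hy, hdx⟩ => hx ⟨hdx, ?_⟩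
        exact (abs_le_of_sq_le_sq' (by nlinarith) (by linarith)).2
      rw [this, indicator_of_notMem hx, measure_empty]
  rw [Measure.volume_eq_prod, Measure.prod_apply hS]
  simp_rw [hslice]
  rw [lintegral_indicator measurableSet_Ioc, ← ofReal_integral_eq_lintegral_ofReal
      (Continuous.integrableOn_Ioc (by fun_prop)) (.of_forall fun x => by positivity),
    intervalIntegral.integral_of_le hdr]

theorem EuclideanSpace.volume_setOf_dist_le_and_mul_cos_lt_inner
    (F v : EuclideanSpace ℝ (Fin 2)) (hv : ‖v‖ = 1) {r φ : ℝ} (hr : 0 ≤ r) (hφ₀ : 0 ≤ φ)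
    (hφ : φ ≤ π) :
    volume {x | dist x F ≤ r ∧ r * cos φ < ⟪v, x - F⟫}
      = ENNReal.ofReal (r ^ 2 * (φ - sin φ * cos φ)) := by
  let e₀ : EuclideanSpace ℝ (Fin 2) := EuclideanSpace.single 0 1
  let e : EuclideanSpace ℝ (Fin 2) ≃ₗᵢ[ℝ] EuclideanSpace ℝ (Fin 2) :=
    (ℝ ∙ (v - e₀))ᗮ.reflection
  have hev : e v = e₀ := Submodule.reflection_sub (by simp [e₀, hv])
  let Φ : ℝ × ℝ → EuclideanSpace ℝ (Fin 2) := fun p =>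
    e.symm (WithLp.toLp 2 ![p.1, p.2]) + F
  have hΦ : MeasurePreserving Φ volume volume :=
    ((measurePreserving_add_right volume F).comp e.symm.measurePreserving).comp
      ((EuclideanSpace.volume_preserving_symm_measurableEquiv_toLp (Fin 2)).symm.comp
        (volume_preserving_finTwoArrow ℝ).symm)
  have hpre : Φ ⁻¹' {x | dist x F ≤ r ∧ r * cos φ < ⟪v, x - F⟫}
      = {p : ℝ × ℝ | p.1 ^ 2 + p.2 ^ 2 ≤ r ^ 2 ∧ r * cos φ < p.1} := by
    ext p
    have hdist : dist (Φ p) F ≤ r ↔ p.1 ^ 2 + p.2 ^ 2 ≤ r ^ 2 := by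
      simp [Φ, dist_eq_norm, EuclideanSpace.norm_eq, Real.sqrt_le_left hr, sq_abs]
    have hinner : ⟪v, Φ p - F⟫ = p.1 := by
      simp only [Φ, add_sub_cancel_right]
      rw [← e.inner_map_map, e.apply_symm_apply, hev]
      simp [e₀, EuclideanSpace.inner_single_left]
    simp only [mem_preimage, mem_ofPred_eq, hdist, hinner]
  rw [← hΦ.measure_preimage (by measurability), hpre,
    volume_setOf_sq_add_sq_le_and_lt_fst (by nlinarith [neg_one_le_cos φ])
      (by nlinarith [cos_le_one φ]),
    integral_two_mul_sqrt_sq_sub_sq_of_mul_cos hr hφ₀ hφ]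

theorem region_E_area
    (A B C G F : EuclideanSpace ℝ (Fin 2))
    (hC : ∠ A C B = Real.pi / 2)
    (ha : 0 < dist B C) (hb : 0 < dist A C)
    (hG : G = EuclideanGeometry.orthogonalProjection (affineSpan ℝ {A, B}) C)
    (hF : F = midpoint ℝ B C)
    (θ : ℝ) (hθ : θ = ∠ B A C) :
    volume {x : EuclideanSpace ℝ (Fin 2) |
        dist x F ≤ dist B C / 2 ∧ (affineSpan ℝ {C, G}).SOppSide x B}
      = ENNReal.ofReal ((dist B C) ^ 2 * (Real.pi - 2 * θ) / 8
          - (dist B C) ^ 3 * dist A C / (4 * (dist A B) ^ 2)) := by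
  have : Fact (finrank ℝ (EuclideanSpace ℝ (Fin 2)) = 2) := ⟨finrank_euclideanSpace_fin⟩
  have hA : A ≠ C := dist_pos.1 hb
  have hB : B ≠ C := dist_pos.1 ha
  have hc : 0 < dist A B :=
    dist_pos.2 fun h => by rw [h, angle_self_of_ne hB] at hC; linarith [pi_pos]
  have hregion : {x | dist x F ≤ dist B C / 2 ∧ (affineSpan ℝ {C, G}).SOppSide x B}
      = {x | dist x F ≤ dist B C / 2 ∧
          dist B C / 2 * cos (∠ C B A) < ⟪(dist A B)⁻¹ • (A - B), x - F⟫} := by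
    ext x
    rw [mem_ofPred_eq, mem_ofPred_eq, hG, hF,
      sOppSide_line_altitude_iff_mul_cos_lt_inner hC hA hB x]
    rfl
  have hunit : ‖(dist A B)⁻¹ • (A - B)‖ = 1 := by
    rw [norm_smul, ← dist_eq_norm, norm_inv, norm_of_nonneg hc.le, inv_mul_cancel₀ hc.ne']
  have hCBA : ∠ C B A = π / 2 - θ := by
    rw [hθ]; linarith [angle_add_angle_add_angle_eq_pi B hA.symm]
  rw [hregion, EuclideanSpace.volume_setOf_dist_le_and_mul_cos_lt_inner _ _ hunit (by positivity)
    (angle_nonneg C B A) (angle_le_pi C B A), sin_angle_of_angle_eq_pi_div_two hC (.inl hA),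
    cos_angle_of_angle_eq_pi_div_two hC, hCBA]
  congr 1
  field_simp
  ring
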